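/- Let k ≥ 1 be a positive integer, 1/2 ≤ s ≤ 1, and define Θ_{k,s} : [0,∞) → [0,∞) by Θ_{k,s}(t) = t^s/(g(t)·(g∘g)(t)⋯g^{∘k}(t)), where g(t) = log(e+t) and g^{∘k} denotes k-fold composition. Then the associated sequence M_p = sup_{t≥0} t^p e^{−Θ_{k,s}(t)} satisfies: (H1) 0 < M_p < ∞ for all p ∈ ℕ; (H2) there exist C > 0 and L ≥ 1 with p^p ≤ C L^p M_p for all p ∈ ℕ (with 0⁰ = 1); and (H3)_s: ∑_{p≥1} (M_{p−1}/M_p)^s = +∞. -/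

import Mathlib

open MeasureTheory Filter
open scoped ENNReal NNReal

noncomputable section

abbrev Esp (d : ℕ) := EuclideanSpace ℝ (Fin d)

/-- Japanese bracket `⟨x⟩ = (1+‖x‖²)^{1/2}`. -/
def jap {d : ℕ} (x : Esp d) : ℝ := Real.sqrt (1 + ‖x‖ ^ 2)

/-- First-order partial derivative in direction `i`. -/
def pderivI {d : ℕ} (i : Fin d) (f : Esp d → ℂ) : Esp d → ℂ :=
  fun x => fderiv ℝ f x (EuclideanSpace.single i 1)

/-- Multi-index partial derivative `∂^β`. -/
def mderiv {d : ℕ} (β : Fin d → ℕ) (f : Esp d → ℂ) : Esp d → ℂ :=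
  Fin.foldr d (fun i g => (pderivI i)^[β i] g) f

/-- `ρ` is a contraction mapping: `|ρ(x)-ρ(y)| ≤ L‖x-y‖` for some `0 ≤ L < 1`. -/
def IsContractionMap {d : ℕ} (ρ : Esp d → ℝ) : Prop :=
  ∃ L : ℝ, 0 ≤ L ∧ L < 1 ∧ ∀ x y : Esp d, |ρ x - ρ y| ≤ L * ‖x - y‖

/-- `ω` is `γ`-thick with respect to the density `ρ`. -/
def IsThick {d : ℕ} (γ : ℝ) (ρ : Esp d → ℝ) (ω : Set (Esp d)) : Prop :=
  ∀ x : Esp d, ENNReal.ofReal γ * volume (Metric.ball x (ρ x)) ≤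
    volume (ω ∩ Metric.ball x (ρ x))

/-- The Bang degree `n_{t,M,r}`. -/
def bangDeg (M : ℕ → ℝ) (t r : ℝ) : ℕ :=
  sSup {N : ℕ | (∑ n ∈ Finset.Icc 1 N, if -Real.log t < (n : ℝ) then M (n - 1) / M n else 0) < r}

/-- `γ_M(p) = sup_{1≤j≤p} j (M_{j+1}M_{j-1}/M_j² - 1)`. -/
def gammaM (M : ℕ → ℝ) (p : ℕ) : ℝ :=
  ⨆ j : {j : ℕ // 1 ≤ j ∧ j ≤ p}, (j : ℝ) * (M (j + 1) * M (j - 1) / (M j) ^ 2 - 1)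

/-- `Γ_M(p) = 4 e^{4+4γ_M(p)}`. -/
def GammaM (M : ℕ → ℝ) (p : ℕ) : ℝ := 4 * Real.exp (4 + 4 * gammaM M p)

/-- Quasi-analyticity: `∑_{p≥1} M_{p-1}/M_p = +∞`. -/
def QuasiAnalytic (M : ℕ → ℝ) : Prop :=
  Tendsto (fun N => ∑ p ∈ Finset.Icc 1 N, M (p - 1) / M p) atTop atTop

/-- The standard one-dimensional Hermite functions. -/
def hermite1 (k : ℕ) (x : ℝ) : ℝ :=
  ((-1 : ℝ) ^ k / Real.sqrt (2 ^ k * k.factorial * Real.sqrt Real.pi)) *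
    Real.exp (x ^ 2 / 2) * iteratedDeriv k (fun y => Real.exp (-y ^ 2)) x

/-- The `d`-dimensional Hermite functions `Φ_α`. -/
def hermiteFun {d : ℕ} (α : Fin d → ℕ) (x : Esp d) : ℝ :=
  ∏ j, hermite1 (α j) (x j)

/-- The Hermite coefficient `⟨f, Φ_α⟩_{L²(ℝ^d)}`. -/
def hermiteCoeff {d : ℕ} (f : Esp d → ℂ) (α : Fin d → ℕ) : ℂ :=
  ∫ x, f x * ((hermiteFun α x : ℝ) : ℂ)

/-- The set of values whose supremum defines `M_p = sup_{t ≥ 0} t^p e^{-Θ(t)}`. -/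
def MseqSet (Θ : ℝ → ℝ) (p : ℕ) : Set ℝ :=
  {y : ℝ | ∃ t : ℝ, 0 ≤ t ∧ y = t ^ p * Real.exp (-Θ t)}

/-- The sequence `M_p = sup_{t ≥ 0} t^p e^{-Θ(t)}` associated with `Θ`. -/
def Mseq (Θ : ℝ → ℝ) (p : ℕ) : ℝ := sSup (MseqSet Θ p)

/-- The square of the norm of the weighted Gelfand–Shilov space `GS_Θ`,
`‖f‖²_{GS_Θ} = ∑_α e^{2Θ(|α|)} |⟨f,Φ_α⟩|²`. -/
def GSThetaNormSq {d : ℕ} (Θ : ℝ → ℝ) (f : Esp d → ℂ) : ℝ≥0∞ :=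
  ∑' α : Fin d → ℕ,
    ENNReal.ofReal (Real.exp (2 * Θ ((∑ i, α i : ℕ) : ℝ)) * ‖hermiteCoeff f α‖ ^ 2)

/-- `g(t) = log(e+t)`. -/
def gfun (t : ℝ) : ℝ := Real.log (Real.exp 1 + t)

/-- `Θ_{k,s}(t) = t^s / (g(t)(g∘g)(t)⋯g^{∘k}(t))`. -/
def ThetaKs (k : ℕ) (s : ℝ) (t : ℝ) : ℝ := t ^ s / ∏ j ∈ Finset.Icc 1 k, gfun^[j] t

/-!
(H1) holds because `Θ_{k,s}` eventually dominates every multiple of `log t`, and (H2) because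
`Θ_{k,s}(p) ≤ p`, whence `M_p ≥ p^p e^{-p}`.

For (H3) put `Q_k(x) = log x · log log x ⋯ log^[k] x` and `τ_n = (n Q_k(n))^{1/s}`. Then
`Θ_{k,s}(τ_n) ≤ n`, and for `t = τ_n e^u` the denominator of `Θ_{k,s}(t)` is at most
`(5(1+u))^k Q_k(n)`, so `τ_n^n e^{-n} ≤ M_n ≤ τ_n^n e^{Bn}`. The sequence `M` is log-convex,
hence `(M_{q+1}/M_q)^q ≤ M_{2q}/M_q`, and the two bounds turn this into
`(M_q/M_{q+1})^s ≥ c/(q Q_k(q)) ≥ c (log^[k+1](q+1) - log^[k+1] q)`, which telescopes to a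
divergent sum.
-/

open Real Filter

section Mseq

variable {Θ : ℝ → ℝ} {p : ℕ}

lemma le_Mseq (hΘ : BddAbove (MseqSet Θ p)) {t : ℝ} (ht : 0 ≤ t) :
    t ^ p * exp (-Θ t) ≤ Mseq Θ p :=
  le_csSup hΘ ⟨t, ht, rfl⟩

lemma Mseq_le {b : ℝ} (h : ∀ t, 0 ≤ t → t ^ p * exp (-Θ t) ≤ b) : Mseq Θ p ≤ b :=
  csSup_le ⟨_, 0, le_rfl, rfl⟩ fun _ ⟨t, ht, hy⟩ => hy ▸ h t ht

lemma Mseq_pos (hΘ : BddAbove (MseqSet Θ p)) : 0 < Mseq Θ p :=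
  (by positivity : (0 : ℝ) < 1 ^ p * exp (-Θ 1)).trans_le (le_Mseq hΘ zero_le_one)

lemma bddAbove_MseqSet (hΘ : ∀ t, 0 ≤ t → 0 ≤ Θ t)
    (h : ∀ᶠ t in atTop, p * log t ≤ Θ t) : BddAbove (MseqSet Θ p) := by
  obtain ⟨T, hT⟩ := eventually_atTop.mp h
  refine ⟨max T 1 ^ p, ?_⟩
  rintro _ ⟨t, ht, rfl⟩
  rcases le_or_gt t (max T 1) with htT | htT
  · calc t ^ p * exp (-Θ t) ≤ t ^ p * 1 := by
          gcongr
          exact exp_le_one_iff.mpr (neg_nonpos.mpr (hΘ t ht))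
      _ ≤ max T 1 ^ p := by rw [mul_one]; gcongr
  · have ht0 : 0 < t := zero_lt_one.trans_le ((le_max_right T 1).trans htT.le)
    have htp : t ^ p ≤ exp (Θ t) := by
      rw [← exp_log (pow_pos ht0 p), log_pow]
      exact exp_le_exp.mpr (hT t ((le_max_left T 1).trans htT.le))
    calc t ^ p * exp (-Θ t) ≤ 1 := by
          rwa [exp_neg, ← div_eq_mul_inv, div_le_one (exp_pos _)]
      _ ≤ max T 1 ^ p := one_le_pow₀ (le_max_right T 1)

lemma Mseq_succ_sq_le (hΘ : ∀ p, BddAbove (MseqSet Θ p)) (p : ℕ) :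
    Mseq Θ (p + 1) ^ 2 ≤ Mseq Θ p * Mseq Θ (p + 2) := by
  have hM : 0 ≤ Mseq Θ p * Mseq Θ (p + 2) :=
    (mul_pos (Mseq_pos (hΘ p)) (Mseq_pos (hΘ _))).le
  have hsqrt : Mseq Θ (p + 1) ≤ √(Mseq Θ p * Mseq Θ (p + 2)) := Mseq_le fun t ht => by
    rw [le_sqrt (by positivity) hM]
    calc (t ^ (p + 1) * exp (-Θ t)) ^ 2
        = (t ^ p * exp (-Θ t)) * (t ^ (p + 2) * exp (-Θ t)) := by ring
      _ ≤ Mseq Θ p * Mseq Θ (p + 2) :=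
          mul_le_mul (le_Mseq (hΘ p) ht) (le_Mseq (hΘ _) ht) (by positivity)
            (Mseq_pos (hΘ p)).le
  simpa [sq_sqrt hM] using pow_le_pow_left₀ (Mseq_pos (hΘ _)).le hsqrt 2

end Mseq

section LogConvex

variable {M : ℕ → ℝ}

lemma monotone_succ_div_of_sq_le (hpos : ∀ p, 0 < M p)
    (hconv : ∀ p, M (p + 1) ^ 2 ≤ M p * M (p + 2)) : Monotone fun q => M (q + 1) / M q := by
  refine monotone_nat_of_le_succ fun q => ?_
  rw [div_le_div_iff₀ (hpos q) (hpos (q + 1))]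
  nlinarith [hconv q]

lemma mul_succ_div_pow_le_of_sq_le (hpos : ∀ p, 0 < M p)
    (hconv : ∀ p, M (p + 1) ^ 2 ≤ M p * M (p + 2)) (q i : ℕ) :
    M q * (M (q + 1) / M q) ^ i ≤ M (q + i) := by
  induction i with
  | zero => simp
  | succ i ih =>
    have hmono := monotone_succ_div_of_sq_le hpos hconv (Nat.le_add_right q i)
    calc M q * (M (q + 1) / M q) ^ (i + 1)
        = M q * (M (q + 1) / M q) ^ i * (M (q + 1) / M q) := by ring
      _ ≤ M (q + i) * (M (q + i + 1) / M (q + i)) :=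
          mul_le_mul ih hmono (div_pos (hpos _) (hpos _)).le (hpos _).le
      _ = M (q + (i + 1)) := mul_div_cancel₀ _ (hpos _).ne'

lemma succ_div_pow_le_of_sq_le (hpos : ∀ p, 0 < M p)
    (hconv : ∀ p, M (p + 1) ^ 2 ≤ M p * M (p + 2)) (q : ℕ) :
    (M (q + 1) / M q) ^ q ≤ M (2 * q) / M q := by
  rw [le_div_iff₀ (hpos q), mul_comm, two_mul]
  exact mul_succ_div_pow_le_of_sq_le hpos hconv q q

end LogConvex

lemma tendsto_sum_Icc_atTop_of_mul_sub_le {a h : ℕ → ℝ} {c : ℝ} (hc : 0 < c)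
    (ha : ∀ p, 0 ≤ a p) (hh : Tendsto h atTop atTop)
    (hah : ∀ᶠ q in atTop, c * (h (q + 1) - h q) ≤ a (q + 1)) :
    Tendsto (fun N => ∑ p ∈ Finset.Icc 1 N, a p) atTop atTop := by
  obtain ⟨P, hP⟩ := eventually_atTop.mp hah
  have hsum : ∀ N, P ≤ N → c * (h N - h P) ≤ ∑ p ∈ Finset.Icc 1 N, a p := by
    intro N hN
    induction N, hN using Nat.le_induction with
    | base => simpa using Finset.sum_nonneg fun p _ => ha p
    | succ N hPN ih =>
      rw [Finset.sum_Icc_succ_top (Nat.le_add_left 1 N)]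
      linarith [hP N hPN]
  refine tendsto_atTop_mono' atTop ((eventually_ge_atTop P).mono hsum) ?_
  exact (tendsto_atTop_add_const_right atTop (-h P) hh).const_mul_atTop hc |>.congr
    fun N => by ring

section IteratedLog

lemma tendsto_iterate_log_atTop (j : ℕ) : Tendsto log^[j] atTop atTop := by
  induction j with
  | zero => exact tendsto_id
  | succ n ih => simpa only [Function.iterate_succ'] using tendsto_log_atTop.comp ih

lemma iterate_log_le_iterate_log {j : ℕ} {x y : ℝ} (hx : ∀ i < j, 1 ≤ log^[i] x)
    (hxy : x ≤ y) : log^[j] x ≤ log^[j] y := by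
  induction j with
  | zero => exact hxy
  | succ n ih =>
    simp only [Function.iterate_succ_apply']
    exact log_le_log (by linarith [hx n n.lt_succ_self])
      (ih fun i hi => hx i (hi.trans n.lt_succ_self))

lemma iterate_log_le_self {j : ℕ} {x : ℝ} (hx : ∀ i < j, 1 ≤ log^[i] x) :
    log^[j] x ≤ x := by
  induction j with
  | zero => exact le_rfl
  | succ n ih =>
    rw [Function.iterate_succ_apply']
    have h1 : 1 ≤ log^[n] x := hx n n.lt_succ_self
    linarith [log_le_sub_one_of_pos (zero_lt_one.trans_le h1),
      ih fun i hi => hx i (hi.trans n.lt_succ_self)]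

lemma log_add_le_log_add_div {a ε : ℝ} (ha : 0 < a) (hε : 0 ≤ ε) :
    log (a + ε) ≤ log a + ε / a := by
  have h := log_le_sub_one_of_pos (div_pos (add_pos_of_pos_of_nonneg ha hε) ha)
  rw [log_div (by positivity) ha.ne', add_div, div_self ha.ne'] at h
  linarith

def iterLogProd (k : ℕ) (x : ℝ) : ℝ := ∏ j ∈ Finset.Icc 1 k, log^[j] x

lemma one_le_iterLogProd {k : ℕ} {x : ℝ} (hx : ∀ j ≤ k, 1 ≤ log^[j] x) :
    1 ≤ iterLogProd k x :=
  Finset.one_le_prod fun j hj => hx j (Finset.mem_Icc.mp hj).2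

lemma iterate_log_add_one_le (m : ℕ) {x : ℝ} (hx : ∀ j ≤ m, 1 ≤ log^[j] x) :
    log^[m + 1] (x + 1) ≤ log^[m + 1] x + (x * iterLogProd m x)⁻¹ := by
  have hx1 : 1 ≤ x := hx 0 (Nat.zero_le m)
  induction m with
  | zero => simpa [iterLogProd] using log_add_le_log_add_div (by linarith) zero_le_one
  | succ m ih =>
    have hA : 1 ≤ log^[m + 1] x := hx _ le_rfl
    have hQ : 0 < x * iterLogProd m x :=
      mul_pos (by linarith) (zero_lt_one.trans_le (one_le_iterLogProd fun j hj => hx j (by omega)))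
    have hA' : 1 ≤ log^[m + 1] (x + 1) :=
      hA.trans (iterate_log_le_iterate_log (fun i hi => hx i (by omega)) (by linarith))
    rw [Function.iterate_succ_apply' _ (m + 1), Function.iterate_succ_apply' _ (m + 1)]
    calc log (log^[m + 1] (x + 1)) ≤ log (log^[m + 1] x + (x * iterLogProd m x)⁻¹) :=
          log_le_log (by linarith) (ih fun j hj => hx j (by omega))
      _ ≤ log (log^[m + 1] x) + (x * iterLogProd m x)⁻¹ / log^[m + 1] x :=
          log_add_le_log_add_div (by linarith) (inv_pos.mpr hQ).le
      _ = log (log^[m + 1] x) + (x * iterLogProd (m + 1) x)⁻¹ := by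
          rw [iterLogProd, iterLogProd, Finset.prod_Icc_succ_top (Nat.le_add_left 1 m),
            div_eq_mul_inv, ← mul_inv, mul_assoc]

lemma log_le_two_mul_log {y z : ℝ} (hy : 1 ≤ log y) (hz : 0 < z) (hzy : z ≤ 2 * y) :
    log z ≤ 2 * log y := by
  have hy0 : 0 < y := by linarith
  have hlog2 : log 2 ≤ 1 := by linarith [log_two_lt_d9]
  calc log z ≤ log (2 * y) := log_le_log hz hzy
    _ = log 2 + log y := log_mul two_ne_zero hy0.ne'
    _ ≤ 2 * log y := by linarith

lemma iterLogProd_two_mul_le {k : ℕ} {x : ℝ} (hx : ∀ j ≤ k, 1 ≤ log^[j] x) :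
    iterLogProd k (2 * x) ≤ 2 ^ k * iterLogProd k x := by
  have hx1 : 1 ≤ x := hx 0 (Nat.zero_le k)
  have hmono : ∀ j ≤ k, log^[j] x ≤ log^[j] (2 * x) := fun j hj =>
    iterate_log_le_iterate_log (fun i hi => hx i (by omega)) (by linarith)
  have hdouble : ∀ j ≤ k, log^[j] (2 * x) ≤ 2 * log^[j] x := by
    intro j hj
    induction j with
    | zero => exact le_rfl
    | succ j ih =>
      simp only [Function.iterate_succ_apply']
      exact log_le_two_mul_log (by simpa only [Function.iterate_succ_apply'] using hx _ hj)
        (by linarith [hx j (by omega), hmono j (by omega)]) (ih (by omega))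
  calc iterLogProd k (2 * x) ≤ ∏ j ∈ Finset.Icc 1 k, 2 * log^[j] x := by
        refine Finset.prod_le_prod (fun j hj => ?_) fun j hj => hdouble j (Finset.mem_Icc.mp hj).2
        linarith [hx j (Finset.mem_Icc.mp hj).2, hmono j (Finset.mem_Icc.mp hj).2]
    _ = 2 ^ k * iterLogProd k x := by
        rw [Finset.prod_mul_distrib, Finset.prod_const, Nat.card_Icc, Nat.add_sub_cancel,
          iterLogProd]

def IsLogLarge (k : ℕ) (x : ℝ) : Prop := (∀ j ≤ k + 1, 1 ≤ log^[j] x) ∧ log x ^ k ≤ x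

lemma eventually_isLogLarge (k : ℕ) : ∀ᶠ x in atTop, IsLogLarge k x := by
  have hiter : ∀ m, ∀ᶠ x in atTop, ∀ j ≤ m, 1 ≤ log^[j] x := by
    intro m
    induction m with
    | zero => simpa using eventually_ge_atTop (1 : ℝ)
    | succ n ih =>
      filter_upwards [ih, (tendsto_iterate_log_atTop (n + 1)).eventually_ge_atTop 1]
        with x hx hx' j hj
      rcases Nat.le_succ_iff.mp hj with hj | rfl
      exacts [hx j hj, hx']
  have hpow : ∀ᶠ x in atTop, log x ^ k ≤ x := by
    filter_upwards [(isLittleO_pow_log_id_atTop (n := k)).bound one_pos,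
      eventually_ge_atTop (1 : ℝ)] with x hx hx1
    simpa [abs_of_nonneg (log_nonneg hx1), abs_of_nonneg (zero_le_one.trans hx1)] using hx
  filter_upwards [hiter (k + 1), hpow] with x h1 h2
  exact ⟨h1, h2⟩

namespace IsLogLarge

variable {k : ℕ} {x : ℝ} (hx : IsLogLarge k x)
include hx

lemma one_le_iterate_log {j : ℕ} (hj : j ≤ k + 1) : 1 ≤ log^[j] x := hx.1 j hj

lemma one_le_log : 1 ≤ log x := hx.one_le_iterate_log (Nat.le_add_left 1 k)

lemma two_le : 2 ≤ x := by
  have h1 : 1 ≤ x := hx.one_le_iterate_log (Nat.zero_le _)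
  have := (le_log_iff_exp_le (by linarith)).mp hx.one_le_log
  linarith [exp_one_gt_d9]

lemma one_le_iterLogProd : 1 ≤ iterLogProd k x :=
  _root_.one_le_iterLogProd fun j hj => hx.one_le_iterate_log (by omega)

lemma iterLogProd_le_self : iterLogProd k x ≤ x := by
  calc iterLogProd k x ≤ ∏ _j ∈ Finset.Icc 1 k, log x := by
        refine Finset.prod_le_prod (fun j hj => ?_) fun j hj => ?_
        · linarith [hx.one_le_iterate_log (j := j) (by grind)]
        · obtain ⟨i, rfl⟩ := Nat.exists_eq_add_of_le' (Finset.mem_Icc.mp hj).1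
          rw [Function.iterate_succ_apply]
          exact iterate_log_le_self fun l hl => by
            simpa only [← Function.iterate_succ_apply] using
              hx.one_le_iterate_log (j := l + 1) (by grind)
    _ = log x ^ k := by rw [Finset.prod_const, Nat.card_Icc, Nat.add_sub_cancel]
    _ ≤ x := hx.2

lemma mul_iterLogProd_pos : 0 < x * iterLogProd k x :=
  mul_pos (by linarith [hx.two_le]) (zero_lt_one.trans_le hx.one_le_iterLogProd)

end IsLogLarge

end IteratedLog

section Gfun

lemma one_le_gfun {t : ℝ} (ht : 0 ≤ t) : 1 ≤ gfun t := by
  rw [gfun, le_log_iff_exp_le (by positivity)]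
  linarith

lemma gfun_le_gfun {a b : ℝ} (ha : 0 ≤ a) (hab : a ≤ b) : gfun a ≤ gfun b :=
  log_le_log (by positivity) (by linarith)

lemma log_le_gfun {t : ℝ} (ht : 0 < t) : log t ≤ gfun t :=
  log_le_log ht (by linarith [exp_pos 1])

lemma gfun_le_one_add_log {t : ℝ} (ht : 2 ≤ t) : gfun t ≤ 1 + log t := by
  have h : exp 1 + t ≤ exp 1 * t := by nlinarith [exp_one_gt_d9]
  calc gfun t ≤ log (exp 1 * t) := log_le_log (by positivity) h
    _ = 1 + log t := by rw [log_mul (exp_pos 1).ne' (by positivity), log_exp]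

lemma gfun_le_self {t : ℝ} (ht : 2 ≤ t) : gfun t ≤ t := by
  linarith [gfun_le_one_add_log ht, log_le_sub_one_of_pos (by linarith : (0 : ℝ) < t)]

lemma iterate_gfun_nonneg (j : ℕ) {t : ℝ} (ht : 0 ≤ t) : 0 ≤ gfun^[j] t := by
  induction j with
  | zero => exact ht
  | succ n ih =>
    rw [Function.iterate_succ_apply']
    linarith [one_le_gfun ih]

lemma one_le_iterate_gfun {j : ℕ} (hj : 1 ≤ j) {t : ℝ} (ht : 0 ≤ t) : 1 ≤ gfun^[j] t := by
  obtain ⟨i, rfl⟩ := Nat.exists_eq_add_of_le' hj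
  rw [Function.iterate_succ_apply']
  exact one_le_gfun (iterate_gfun_nonneg i ht)

lemma iterate_gfun_le_max (j : ℕ) {t : ℝ} (ht : 0 ≤ t) : gfun^[j] t ≤ max t 2 := by
  induction j with
  | zero => exact le_max_left t 2
  | succ n ih =>
    rw [Function.iterate_succ_apply']
    rcases le_or_gt (gfun^[n] t) 2 with h | h
    · calc gfun (gfun^[n] t) ≤ gfun 2 := gfun_le_gfun (iterate_gfun_nonneg n ht) h
        _ ≤ 2 := gfun_le_self le_rfl
        _ ≤ max t 2 := le_max_right t 2
    · exact (gfun_le_self h.le).trans ih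

lemma iterate_gfun_le_two_mul {j : ℕ} (hj : 1 ≤ j) {t : ℝ} (ht : 0 ≤ t) :
    gfun^[j] t ≤ 2 * gfun t := by
  obtain ⟨i, rfl⟩ := Nat.exists_eq_add_of_le' hj
  have h1 : 1 ≤ gfun t := one_le_gfun ht
  rw [Function.iterate_succ_apply]
  exact (iterate_gfun_le_max i (by linarith)).trans (max_le (by linarith) (by linarith))

lemma one_le_prod_iterate_gfun (k : ℕ) {t : ℝ} (ht : 0 ≤ t) :
    1 ≤ ∏ j ∈ Finset.Icc 1 k, gfun^[j] t :=
  Finset.one_le_prod fun _ hj => one_le_iterate_gfun (Finset.mem_Icc.mp hj).1 ht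

lemma prod_iterate_gfun_le_pow (k : ℕ) {t : ℝ} (ht : 0 ≤ t) :
    ∏ j ∈ Finset.Icc 1 k, gfun^[j] t ≤ (2 * gfun t) ^ k := by
  calc ∏ j ∈ Finset.Icc 1 k, gfun^[j] t ≤ ∏ _j ∈ Finset.Icc 1 k, 2 * gfun t :=
        Finset.prod_le_prod (fun j _ => iterate_gfun_nonneg j ht)
          fun _ hj => iterate_gfun_le_two_mul (Finset.mem_Icc.mp hj).1 ht
    _ = (2 * gfun t) ^ k := by rw [Finset.prod_const, Nat.card_Icc, Nat.add_sub_cancel]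

lemma iterate_log_le_iterate_gfun {j : ℕ} {x t : ℝ} (hx : ∀ i < j, 1 ≤ log^[i] x)
    (hxt : x ≤ t) : log^[j] x ≤ gfun^[j] t := by
  induction j with
  | zero => exact hxt
  | succ n ih =>
    simp only [Function.iterate_succ_apply']
    have h1 : 1 ≤ log^[n] x := hx n n.lt_succ_self
    have h2 : log^[n] x ≤ gfun^[n] t := ih fun i hi => hx i (hi.trans n.lt_succ_self)
    exact (log_le_log (by linarith) h2).trans (log_le_gfun (by linarith))

end Gfun

section Theta

variable (k : ℕ) (s : ℝ)

lemma ThetaKs_nonneg {t : ℝ} (ht : 0 ≤ t) : 0 ≤ ThetaKs k s t :=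
  div_nonneg (rpow_nonneg ht s) (zero_le_one.trans (one_le_prod_iterate_gfun k ht))

lemma ThetaKs_le_rpow {t : ℝ} (ht : 0 ≤ t) : ThetaKs k s t ≤ t ^ s :=
  div_le_self (rpow_nonneg ht s) (one_le_prod_iterate_gfun k ht)

lemma rpow_div_pow_le_ThetaKs {t : ℝ} (ht : 0 ≤ t) :
    t ^ s / (2 * gfun t) ^ k ≤ ThetaKs k s t :=
  div_le_div_of_nonneg_left (rpow_nonneg ht s)
    (zero_lt_one.trans_le (one_le_prod_iterate_gfun k ht)) (prod_iterate_gfun_le_pow k ht)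

variable {s}

lemma ThetaKs_natCast_le (hs : 0 < s) (hs1 : s ≤ 1) (p : ℕ) : ThetaKs k s p ≤ p := by
  rcases Nat.eq_zero_or_pos p with rfl | hp
  · simp [ThetaKs, zero_rpow hs.ne']
  · calc ThetaKs k s p ≤ (p : ℝ) ^ s := ThetaKs_le_rpow k s p.cast_nonneg
      _ ≤ (p : ℝ) ^ (1 : ℝ) := rpow_le_rpow_of_exponent_le (by exact_mod_cast hp) hs1
      _ = p := rpow_one _

lemma eventually_mul_log_le_ThetaKs (hs : 0 < s) (c : ℝ) :
    ∀ᶠ t in atTop, c * log t ≤ ThetaKs k s t := by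
  have hC : 0 < 4 ^ k * (|c| + 1) := by positivity
  filter_upwards [(isLittleO_log_rpow_rpow_atTop ((k : ℝ) + 1) hs).bound (inv_pos.mpr hC),
    eventually_ge_atTop (exp 1)] with t hlo ht
  have ht0 : 0 < t := (exp_pos 1).trans_le ht
  have hlog : 1 ≤ log t := (le_log_iff_exp_le ht0).mpr ht
  have hg : 2 * gfun t ≤ 4 * log t := by
    linarith [gfun_le_one_add_log (by linarith [exp_one_gt_d9] : (2 : ℝ) ≤ t)]
  rw [norm_of_nonneg (by positivity), norm_of_nonneg (by positivity), ← Nat.cast_add_one,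
    rpow_natCast, ← div_eq_inv_mul, le_div_iff₀ hC, mul_comm] at hlo
  calc c * log t ≤ (|c| + 1) * log t := by gcongr; linarith [le_abs_self c]
    _ = 4 ^ k * (|c| + 1) * log t ^ (k + 1) / (4 * log t) ^ k := by
        field_simp
        ring
    _ ≤ t ^ s / (2 * gfun t) ^ k :=
        div_le_div₀ (rpow_nonneg ht0.le s) hlo
          (pow_pos (by linarith [one_le_gfun ht0.le]) k)
          (pow_le_pow_left₀ (by linarith [one_le_gfun ht0.le]) hg k)
    _ ≤ ThetaKs k s t := rpow_div_pow_le_ThetaKs k s ht0.le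

lemma bddAbove_MseqSet_ThetaKs (hs : 0 < s) (p : ℕ) : BddAbove (MseqSet (ThetaKs k s) p) :=
  bddAbove_MseqSet (fun _ ht => ThetaKs_nonneg k s ht) (eventually_mul_log_le_ThetaKs k hs p)

lemma natCast_pow_le_exp_one_pow_mul_Mseq_ThetaKs (hs : 0 < s) (hs1 : s ≤ 1) (p : ℕ) :
    (p : ℝ) ^ p ≤ exp 1 ^ p * Mseq (ThetaKs k s) p := by
  have hM : (p : ℝ) ^ p * exp (-p) ≤ Mseq (ThetaKs k s) p :=
    (mul_le_mul_of_nonneg_left (exp_le_exp.mpr (neg_le_neg (ThetaKs_natCast_le k hs hs1 p)))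
      (by positivity)).trans (le_Mseq (bddAbove_MseqSet_ThetaKs k hs p) p.cast_nonneg)
  calc (p : ℝ) ^ p = exp 1 ^ p * ((p : ℝ) ^ p * exp (-p)) := by
        rw [exp_one_pow, mul_left_comm, ← exp_add, add_neg_cancel, exp_zero, mul_one]
    _ ≤ exp 1 ^ p * Mseq (ThetaKs k s) p := by gcongr

end Theta

lemma exists_le_add_exp_div_pow {a : ℝ} (ha : 0 < a) {C : ℝ} (hC : 0 < C) (k : ℕ) :
    ∃ B, 0 ≤ B ∧ ∀ u, 0 ≤ u → u ≤ B + exp (a * u) / (C * (1 + u)) ^ k := by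
  have hD : 0 < (2 * C) ^ k := by positivity
  obtain ⟨U, hU⟩ := eventually_atTop.mp
    (((isLittleO_pow_exp_pos_mul_atTop (k + 1) ha).bound (inv_pos.mpr hD)).and
      (eventually_ge_atTop 1))
  refine ⟨max U 0, le_max_right U 0, fun u hu => ?_⟩
  have hpos : 0 ≤ exp (a * u) / (C * (1 + u)) ^ k := by positivity
  rcases le_or_gt U u with hUu | huU
  · obtain ⟨hlo, hu1⟩ := hU u hUu
    rw [norm_of_nonneg (by positivity), norm_of_nonneg (exp_pos _).le, ← div_eq_inv_mul,
      le_div_iff₀ hD] at hlo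
    have hu_le : u ≤ exp (a * u) / (C * (1 + u)) ^ k := by
      rw [le_div_iff₀ (by positivity)]
      calc u * (C * (1 + u)) ^ k ≤ u * (2 * C * u) ^ k :=
            mul_le_mul_of_nonneg_left (pow_le_pow_left₀ (by positivity) (by nlinarith) k) hu
        _ = u ^ (k + 1) * (2 * C) ^ k := by ring
        _ ≤ exp (a * u) := hlo
    linarith [le_max_right U 0]
  · linarith [le_max_left U 0]

section Tau

/-- Up to a factor `e^{O(n)}`, `t ↦ t^n e^{-Θ_{k,s}(t)}` is maximal at `t = τ_n`. -/
def tauKs (k : ℕ) (s x : ℝ) : ℝ := (x * iterLogProd k x) ^ s⁻¹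

variable {k : ℕ} {s x : ℝ}

lemma tauKs_rpow (hs : 0 < s) (hx : IsLogLarge k x) : tauKs k s x ^ s = x * iterLogProd k x := by
  rw [tauKs, ← rpow_mul hx.mul_iterLogProd_pos.le, inv_mul_cancel₀ hs.ne', rpow_one]

lemma self_le_tauKs (hs : 0 < s) (hs1 : s ≤ 1) (hx : IsLogLarge k x) : x ≤ tauKs k s x := by
  have h1 : 1 ≤ x := by linarith [hx.two_le]
  calc x = x ^ (1 : ℝ) := (rpow_one x).symm
    _ ≤ x ^ s⁻¹ := rpow_le_rpow_of_exponent_le h1 ((one_le_inv₀ hs).mpr hs1)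
    _ ≤ tauKs k s x := rpow_le_rpow (by linarith)
        (le_mul_of_one_le_right (by linarith) hx.one_le_iterLogProd) (by positivity)

lemma two_le_tauKs (hs : 0 < s) (hs1 : s ≤ 1) (hx : IsLogLarge k x) : 2 ≤ tauKs k s x :=
  hx.two_le.trans (self_le_tauKs hs hs1 hx)

lemma log_tauKs_le (hs : 1 / 2 ≤ s) (hx : IsLogLarge k x) : log (tauKs k s x) ≤ 4 * log x := by
  have hQ := hx.one_le_iterLogProd
  have hlogQ : log (iterLogProd k x) ≤ log x := log_le_log (by linarith) hx.iterLogProd_le_self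
  have hinv : s⁻¹ ≤ 2 := by rw [inv_le_comm₀ (by linarith) two_pos]; linarith
  rw [tauKs, log_rpow hx.mul_iterLogProd_pos, log_mul (by linarith [hx.two_le]) (by linarith)]
  nlinarith [log_nonneg hQ, hx.one_le_log]

lemma iterLogProd_le_prod_iterate_gfun (hx : IsLogLarge k x) {t : ℝ} (hxt : x ≤ t) :
    iterLogProd k x ≤ ∏ j ∈ Finset.Icc 1 k, gfun^[j] t := by
  refine Finset.prod_le_prod (fun j hj => ?_) fun j hj => ?_
  · linarith [hx.one_le_iterate_log (j := j) (by grind)]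
  · exact iterate_log_le_iterate_gfun (fun i hi => hx.one_le_iterate_log (by grind)) hxt

lemma ThetaKs_tauKs_le (hs : 0 < s) (hs1 : s ≤ 1) (hx : IsLogLarge k x) :
    ThetaKs k s (tauKs k s x) ≤ x := by
  have hQ : 0 < iterLogProd k x := zero_lt_one.trans_le hx.one_le_iterLogProd
  calc ThetaKs k s (tauKs k s x) ≤ x * iterLogProd k x / iterLogProd k x := by
        rw [ThetaKs, tauKs_rpow hs hx]
        exact div_le_div_of_nonneg_left hx.mul_iterLogProd_pos.le hQ
          (iterLogProd_le_prod_iterate_gfun hx (self_le_tauKs hs hs1 hx))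
    _ = x := mul_div_cancel_right₀ x hQ.ne'

lemma le_Mseq_ThetaKs (hs : 0 < s) (hs1 : s ≤ 1) {n : ℕ} (hn : IsLogLarge k n) :
    tauKs k s n ^ n * exp (-n) ≤ Mseq (ThetaKs k s) n := by
  have hτ : 0 ≤ tauKs k s n := by linarith [two_le_tauKs hs hs1 hn]
  calc tauKs k s n ^ n * exp (-n) ≤ tauKs k s n ^ n * exp (-ThetaKs k s (tauKs k s n)) := by
        gcongr
        exact ThetaKs_tauKs_le hs hs1 hn
    _ ≤ Mseq (ThetaKs k s) n := le_Mseq (bddAbove_MseqSet_ThetaKs k hs n) hτ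

lemma gfun_le_mul_log_of_le {L u t : ℝ} (hL0 : 0 < L) (hL : 1 ≤ log L) (hu : 0 ≤ u)
    (ht : 0 ≤ t) (htL : t ≤ 5 * L * (1 + u)) : gfun t ≤ 5 * log L * (1 + u) := by
  have hL1 : 1 ≤ L := by linarith [(le_log_iff_exp_le hL0).mp hL, add_one_le_exp (1 : ℝ)]
  have hlog5 : log 5 ≤ 2 := by
    rw [log_le_iff_le_exp (by norm_num)]
    linarith [quadratic_le_exp_of_nonneg (zero_le_two (α := ℝ))]
  have hlogu : log (1 + u) ≤ u := by linarith [log_le_sub_one_of_pos (by linarith : 0 < 1 + u)]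
  calc gfun t ≤ gfun (5 * L * (1 + u)) := gfun_le_gfun ht htL
    _ ≤ 1 + log (5 * L * (1 + u)) := gfun_le_one_add_log (by nlinarith)
    _ = 1 + log 5 + log L + log (1 + u) := by
        rw [log_mul (by positivity) (by linarith), log_mul (by norm_num) hL0.ne']; ring
    _ ≤ 5 * log L * (1 + u) := by nlinarith

lemma iterate_gfun_le_mul_iterate_log (hx : IsLogLarge k x) {t u : ℝ} (ht : 0 ≤ t)
    (hu : 0 ≤ u) (h1 : gfun t ≤ 5 * log x * (1 + u)) {j : ℕ} (hj : 1 ≤ j) (hjk : j ≤ k) :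
    gfun^[j] t ≤ 5 * log^[j] x * (1 + u) := by
  induction j, hj using Nat.le_induction with
  | base => simpa using h1
  | succ j hj ih =>
    have hL := hx.one_le_iterate_log (j := j + 1) (by omega)
    rw [Function.iterate_succ_apply'] at hL ⊢
    rw [Function.iterate_succ_apply']
    exact gfun_le_mul_log_of_le (by linarith [hx.one_le_iterate_log (j := j) (by omega)]) hL hu
      (iterate_gfun_nonneg j ht) (ih (by omega))

lemma mul_exp_div_pow_le_ThetaKs (hs0 : 1 / 2 ≤ s) (hs1 : s ≤ 1) (hx : IsLogLarge k x)
    {u : ℝ} (hu : 0 ≤ u) :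
    x * (exp (s * u) / (5 * (1 + u)) ^ k) ≤ ThetaKs k s (tauKs k s x * exp u) := by
  have hs : 0 < s := by linarith
  have hτ := two_le_tauKs hs hs1 hx
  set t := tauKs k s x * exp u with ht_def
  have ht : tauKs k s x ≤ t := le_mul_of_one_le_right (by linarith) (one_le_exp hu)
  have hbase : gfun t ≤ 5 * log x * (1 + u) := by
    have hlogt : log t = log (tauKs k s x) + u := by
      rw [log_mul (by linarith) (exp_pos u).ne', log_exp]
    nlinarith [gfun_le_one_add_log (hτ.trans ht), log_tauKs_le hs0 hx, hx.one_le_log]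
  have hprod : ∏ j ∈ Finset.Icc 1 k, gfun^[j] t ≤ (5 * (1 + u)) ^ k * iterLogProd k x := by
    calc ∏ j ∈ Finset.Icc 1 k, gfun^[j] t
        ≤ ∏ j ∈ Finset.Icc 1 k, 5 * (1 + u) * log^[j] x := by
          refine Finset.prod_le_prod (fun j _ => iterate_gfun_nonneg j (by linarith)) fun j hj => ?_
          rw [mul_right_comm]
          exact iterate_gfun_le_mul_iterate_log hx (by linarith) hu hbase
            (Finset.mem_Icc.mp hj).1 (Finset.mem_Icc.mp hj).2
      _ = (5 * (1 + u)) ^ k * iterLogProd k x := by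
          rw [Finset.prod_mul_distrib, Finset.prod_const, Nat.card_Icc, Nat.add_sub_cancel,
            iterLogProd]
  have hts : t ^ s = x * iterLogProd k x * exp (s * u) := by
    rw [ht_def, mul_rpow (by linarith) (exp_pos u).le, tauKs_rpow hs hx, ← exp_mul, mul_comm u s]
  have hQ : 0 < iterLogProd k x := zero_lt_one.trans_le hx.one_le_iterLogProd
  calc x * (exp (s * u) / (5 * (1 + u)) ^ k)
      = t ^ s / ((5 * (1 + u)) ^ k * iterLogProd k x) := by
        rw [hts]
        field_simp
    _ ≤ ThetaKs k s t := div_le_div_of_nonneg_left (rpow_nonneg (by linarith) s)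
        (zero_lt_one.trans_le (one_le_prod_iterate_gfun k (by linarith))) hprod

lemma Mseq_ThetaKs_le (hs0 : 1 / 2 ≤ s) (hs1 : s ≤ 1) {B : ℝ} (hB0 : 0 ≤ B)
    (hB : ∀ u, 0 ≤ u → u ≤ B + exp (s * u) / (5 * (1 + u)) ^ k) {n : ℕ}
    (hn : IsLogLarge k n) :
    Mseq (ThetaKs k s) n ≤ tauKs k s n ^ n * exp (B * n) := by
  have hτ : 0 < tauKs k s n := by linarith [two_le_tauKs (by linarith) hs1 hn]
  refine Mseq_le fun t ht => ?_
  rcases le_or_gt t (tauKs k s n) with htτ | htτ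
  · calc t ^ n * exp (-ThetaKs k s t) ≤ tauKs k s n ^ n * 1 :=
          mul_le_mul (pow_le_pow_left₀ ht htτ n)
            (exp_le_one_iff.mpr (neg_nonpos.mpr (ThetaKs_nonneg k s ht))) (exp_pos _).le
            (by positivity)
      _ ≤ tauKs k s n ^ n * exp (B * n) := by
          gcongr
          exact one_le_exp (by positivity)
  · obtain ⟨u, hu, rfl⟩ : ∃ u, 0 ≤ u ∧ t = tauKs k s n * exp u :=
      ⟨log (t / tauKs k s n), log_nonneg ((one_le_div hτ).mpr htτ.le), by
        rw [exp_log (div_pos (hτ.trans htτ) hτ), mul_div_cancel₀ _ hτ.ne']⟩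
    have hΘ := mul_exp_div_pow_le_ThetaKs hs0 hs1 hn hu
    have hnu : (n : ℝ) * u ≤ n * B + n * (exp (s * u) / (5 * (1 + u)) ^ k) := by
      rw [← mul_add]
      exact mul_le_mul_of_nonneg_left (hB u hu) n.cast_nonneg
    calc (tauKs k s n * exp u) ^ n * exp (-ThetaKs k s (tauKs k s n * exp u))
        = tauKs k s n ^ n * exp (n * u - ThetaKs k s (tauKs k s n * exp u)) := by
          rw [mul_pow, ← exp_nat_mul, mul_assoc, ← exp_add, sub_eq_add_neg]
      _ ≤ tauKs k s n ^ n * exp (B * n) := by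
          gcongr
          linarith

lemma rpow_tauKs_sq_div_le (hs : 0 < s) (hs1 : s ≤ 1) (hx : IsLogLarge k x)
    (h2x : IsLogLarge k (2 * x)) {E : ℝ} (hE : 1 ≤ E) :
    (tauKs k s (2 * x) ^ 2 * E / tauKs k s x) ^ s ≤
      2 ^ (2 * k + 2) * E * (x * iterLogProd k x) := by
  have hτ : 0 < tauKs k s x := by linarith [two_le_tauKs hs hs1 hx]
  have hτ2 : 0 ≤ tauKs k s (2 * x) := by linarith [two_le_tauKs hs hs1 h2x]
  have hQ2 := iterLogProd_two_mul_le (k := k) fun j hj => hx.one_le_iterate_log (j := j) (by omega)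
  have hEs : E ^ s ≤ E := by simpa using rpow_le_rpow_of_exponent_le hE hs1
  rw [div_rpow (by positivity) hτ.le, mul_rpow (by positivity) (by linarith),
    ← rpow_pow_comm hτ2, tauKs_rpow hs h2x, tauKs_rpow hs hx,
    div_le_iff₀ hx.mul_iterLogProd_pos]
  calc (2 * x * iterLogProd k (2 * x)) ^ 2 * E ^ s
      ≤ (2 * x * (2 ^ k * iterLogProd k x)) ^ 2 * E := by
        gcongr
        · exact h2x.mul_iterLogProd_pos.le
        · linarith [hx.two_le]
    _ = 2 ^ (2 * k + 2) * E * (x * iterLogProd k x) * (x * iterLogProd k x) := by ring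

lemma Mseq_ThetaKs_succ_div_le (hs0 : 1 / 2 ≤ s) (hs1 : s ≤ 1) {B : ℝ} (hB0 : 0 ≤ B)
    (hB : ∀ u, 0 ≤ u → u ≤ B + exp (s * u) / (5 * (1 + u)) ^ k) {q : ℕ}
    (hq : IsLogLarge k q) (h2q : IsLogLarge k (2 * q)) :
    Mseq (ThetaKs k s) (q + 1) / Mseq (ThetaKs k s) q ≤
      tauKs k s (2 * q) ^ 2 * exp (2 * B + 1) / tauKs k s q := by
  have hs : 0 < s := by linarith
  have hbdd := bddAbove_MseqSet_ThetaKs k hs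
  have hMpos : ∀ p, 0 < Mseq (ThetaKs k s) p := fun p => Mseq_pos (hbdd p)
  have hτ : 0 < tauKs k s q := by linarith [two_le_tauKs hs hs1 hq]
  have hτ2 : 0 < tauKs k s (2 * q) := by linarith [two_le_tauKs hs hs1 h2q]
  have hq0 : q ≠ 0 := by
    rintro rfl
    have := hq.two_le
    norm_num at this
  have hup := Mseq_ThetaKs_le hs0 hs1 hB0 hB (n := 2 * q) (by push_cast; exact h2q)
  push_cast at hup
  have hexp : exp (2 * B + 1) ^ q = exp (B * (2 * q)) / exp (-q) := by
    rw [← exp_nat_mul, ← exp_sub]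
    ring_nf
  refine (pow_le_pow_iff_left₀ (div_pos (hMpos _) (hMpos _)).le (by positivity) hq0).mp ?_
  calc (Mseq (ThetaKs k s) (q + 1) / Mseq (ThetaKs k s) q) ^ q
      ≤ Mseq (ThetaKs k s) (2 * q) / Mseq (ThetaKs k s) q :=
        succ_div_pow_le_of_sq_le hMpos (Mseq_succ_sq_le hbdd) q
    _ ≤ tauKs k s (2 * q) ^ (2 * q) * exp (B * (2 * q)) / (tauKs k s q ^ q * exp (-q)) :=
        div_le_div₀ (by positivity) hup (by positivity) (le_Mseq_ThetaKs hs hs1 hq)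
    _ = (tauKs k s (2 * q) ^ 2 * exp (2 * B + 1) / tauKs k s q) ^ q := by
        rw [div_pow, mul_pow, ← pow_mul, hexp]
        field_simp

lemma eventually_mul_inv_le_Mseq_ThetaKs_div_rpow (hs0 : 1 / 2 ≤ s) (hs1 : s ≤ 1) :
    ∃ c > 0, ∀ᶠ q : ℕ in atTop, c * (q * iterLogProd k q)⁻¹ ≤
      (Mseq (ThetaKs k s) q / Mseq (ThetaKs k s) (q + 1)) ^ s := by
  have hs : 0 < s := by linarith
  obtain ⟨B, hB0, hB⟩ := exists_le_add_exp_div_pow hs (by norm_num : (0 : ℝ) < 5) k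
  refine ⟨(2 ^ (2 * k + 2) * exp (2 * B + 1))⁻¹, by positivity, ?_⟩
  have hlarge : ∀ᶠ x in atTop, IsLogLarge k x ∧ IsLogLarge k (2 * x) :=
    (eventually_isLogLarge k).and
      ((tendsto_id.const_mul_atTop two_pos).eventually (eventually_isLogLarge k))
  filter_upwards [tendsto_natCast_atTop_atTop.eventually hlarge] with q ⟨hq, h2q⟩
  set R := tauKs k s (2 * q) ^ 2 * exp (2 * B + 1) / tauKs k s q
  have hMpos : ∀ p, 0 < Mseq (ThetaKs k s) p :=
    fun p => Mseq_pos (bddAbove_MseqSet_ThetaKs k hs p)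
  have hRpos : 0 < R :=
    (div_pos (hMpos _) (hMpos _)).trans_le (Mseq_ThetaKs_succ_div_le hs0 hs1 hB0 hB hq h2q)
  calc (2 ^ (2 * k + 2) * exp (2 * B + 1))⁻¹ * (q * iterLogProd k q)⁻¹
      = (2 ^ (2 * k + 2) * exp (2 * B + 1) * (q * iterLogProd k q))⁻¹ := (mul_inv _ _).symm
    _ ≤ (R ^ s)⁻¹ := inv_anti₀ (rpow_pos_of_pos hRpos s)
        (rpow_tauKs_sq_div_le hs hs1 hq h2q (one_le_exp (by linarith)))
    _ = R⁻¹ ^ s := (inv_rpow hRpos.le s).symm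
    _ ≤ (Mseq (ThetaKs k s) q / Mseq (ThetaKs k s) (q + 1)) ^ s := by
        refine rpow_le_rpow (inv_nonneg.mpr hRpos.le) ?_ hs.le
        rw [← inv_div]
        exact inv_anti₀ (div_pos (hMpos _) (hMpos _))
          (Mseq_ThetaKs_succ_div_le hs0 hs1 hB0 hB hq h2q)

end Tau

theorem stmt_6_general (k : ℕ) (s : ℝ) (hs0 : 1 / 2 ≤ s) (hs1 : s ≤ 1) :
    (∀ p : ℕ, BddAbove (MseqSet (ThetaKs k s) p) ∧ 0 < Mseq (ThetaKs k s) p) ∧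
    (∃ C : ℝ, 0 < C ∧ ∃ L : ℝ, 1 ≤ L ∧
      ∀ p : ℕ, (p : ℝ) ^ p ≤ C * L ^ p * Mseq (ThetaKs k s) p) ∧
    Tendsto
      (fun N => ∑ p ∈ Finset.Icc 1 N,
        (Mseq (ThetaKs k s) (p - 1) / Mseq (ThetaKs k s) p) ^ s)
      atTop atTop := by
  have hs : 0 < s := by linarith
  have hbdd := bddAbove_MseqSet_ThetaKs k hs
  refine ⟨fun p => ⟨hbdd p, Mseq_pos (hbdd p)⟩,
    ⟨1, one_pos, exp 1, one_le_exp zero_le_one, fun p => ?_⟩, ?_⟩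
  · rw [one_mul]
    exact natCast_pow_le_exp_one_pow_mul_Mseq_ThetaKs k hs hs1 p
  · obtain ⟨c, hc, hcM⟩ := eventually_mul_inv_le_Mseq_ThetaKs_div_rpow (k := k) hs0 hs1
    refine tendsto_sum_Icc_atTop_of_mul_sub_le hc
      (fun p => rpow_nonneg (div_pos (Mseq_pos (hbdd _)) (Mseq_pos (hbdd _))).le s)
      ((tendsto_iterate_log_atTop (k + 1)).comp tendsto_natCast_atTop_atTop) ?_
    filter_upwards [hcM, tendsto_natCast_atTop_atTop.eventually (eventually_isLogLarge k)]
      with q hq hlarge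
    have hstep := iterate_log_add_one_le k fun j hj => hlarge.one_le_iterate_log (by omega)
    calc c * ((log^[k + 1] ∘ Nat.cast) (q + 1) - (log^[k + 1] ∘ Nat.cast) q)
        ≤ c * (q * iterLogProd k q)⁻¹ := by
          gcongr
          simp only [Function.comp_apply, Nat.cast_add_one]
          linarith
      _ ≤ _ := by simpa using hq

/-- The sequence associated with `Θ_{k,s}` satisfies `(H1)`, `(H2)` and `(H3)_s`
(Proposition `ex_qa_bertrand`). -/
theorem stmt_6 (k : ℕ) (hk : 1 ≤ k) (s : ℝ) (hs0 : 1 / 2 ≤ s) (hs1 : s ≤ 1) :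
    (∀ p : ℕ, BddAbove (MseqSet (ThetaKs k s) p) ∧ 0 < Mseq (ThetaKs k s) p) ∧
    (∃ C : ℝ, 0 < C ∧ ∃ L : ℝ, 1 ≤ L ∧
      ∀ p : ℕ, (p : ℝ) ^ p ≤ C * L ^ p * Mseq (ThetaKs k s) p) ∧
    Tendsto
      (fun N => ∑ p ∈ Finset.Icc 1 N,
        (Mseq (ThetaKs k s) (p - 1) / Mseq (ThetaKs k s) p) ^ s)
      atTop atTop :=
  stmt_6_general k s hs0 hs1

end
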